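/- arXiv:2408.01535 — 6 statements merged into one kernel-verified Lean document; each statement's English description precedes it below -/
import Mathlib

section
/- Let n ≥ 5 and let c be a (5,8)-coloring of K_n. Then every connected component of every monochromatic subgraph (the graph formed by all edges of a single fixed color) has at most 3 edges. -/
/-!
If a monochromatic component had four edges, one could find five vertices spanning four edges of
that color: grow a spanning tree of the component when it has at least five vertices, and otherwise
pad its vertex set with arbitrary vertices. Those five vertices span ten edges, four of which share
a color, so they see at most `10 - 4 + 1 = 7` colors, contradicting the `(5,8)` condition.
-/

/-- The number of distinct colors appearing on the (non-loop) edges of `K_n`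
inside the vertex set `S`, under the edge-coloring `c`. -/
noncomputable def numColorsOn {n : ℕ} {C : Type*} (c : Sym2 (Fin n) → C) (S : Finset (Fin n)) : ℕ :=
  (c '' {e : Sym2 (Fin n) | e ∈ S.sym2 ∧ ¬ e.IsDiag}).ncard

/-- `c` is a `(p,q)`-coloring of `K_n`: every set of `p` vertices spans edges
bearing at least `q` distinct colors. -/
def IsPQColoring (n p q : ℕ) {C : Type*} (c : Sym2 (Fin n) → C) : Prop :=
  ∀ S : Finset (Fin n), S.card = p → q ≤ numColorsOn c S

/-- The monochromatic subgraph of `K_n` in color `k`: the simple graph whose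
edges are exactly the edges of color `k`. -/
def monoGraph {n : ℕ} {C : Type*} (c : Sym2 (Fin n) → C) (k : C) : SimpleGraph (Fin n) where
  Adj v w := v ≠ w ∧ c s(v, w) = k
  symm := by
    constructor
    intro v w h
    refine ⟨h.1.symm, ?_⟩
    rw [Sym2.eq_swap]
    exact h.2
  loopless := ⟨fun v h => h.1 rfl⟩

/-- The set of edges of the monochromatic subgraph in color `k` belonging to
the connected component of the vertex `v`. -/
def componentEdgeSet {n : ℕ} {C : Type*} (c : Sym2 (Fin n) → C) (k : C) (v : Fin n) :
    Set (Sym2 (Fin n)) :=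
  {e : Sym2 (Fin n) | e ∈ (monoGraph c k).edgeSet ∧ ∀ x ∈ e, (monoGraph c k).Reachable v x}

open Finset

theorem Finset.card_image_add_card_le_of_eqOn {α β : Type*} [DecidableEq α] [DecidableEq β]
    {s t : Finset α} {f : α → β} {b : β} (hts : t ⊆ s) (hf : ∀ x ∈ t, f x = b) :
    #(s.image f) + #t ≤ #s + 1 := by
  have himage : t.image f ⊆ {b} := by
    intro y hy
    obtain ⟨x, hx, rfl⟩ := mem_image.1 hy
    exact mem_singleton.2 (hf x hx)
  calc #(s.image f) + #t
      = #((s \ t).image f ∪ t.image f) + #t := by rw [← image_union, sdiff_union_of_subset hts]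
    _ ≤ #(s \ t) + 1 + #t := by
        gcongr
        exact (card_union_le _ _).trans
          (add_le_add card_image_le ((card_le_card himage).trans (card_singleton b).le))
    _ = #s + 1 := by rw [add_right_comm, card_sdiff_add_card_eq_card hts]

theorem Finset.card_filter_not_isDiag_sym2 {α : Type*} [DecidableEq α] (s : Finset α) :
    #{e ∈ s.sym2 | ¬e.IsDiag} = (#s).choose 2 := by
  rw [sym2_eq_image, Sym2.filter_image_mk_not_isDiag, Sym2.card_image_offDiag]

namespace SimpleGraph

variable {V : Type*} (G : SimpleGraph V) (v : V)

theorem exists_reachable_finset_card_edges {m : ℕ} (hm : m + 1 ≤ {x | G.Reachable v x}.ncard) :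
    ∃ (S : Finset V) (E : Finset (Sym2 V)), v ∈ S ∧ #S = m + 1 ∧ #E = m ∧
      (∀ x ∈ S, G.Reachable v x) ∧ E ⊆ S.sym2 ∧ (E : Set (Sym2 V)) ⊆ G.edgeSet := by
  classical
  induction m with
  | zero =>
    exact ⟨{v}, ∅, mem_singleton_self v, card_singleton v, card_empty,
      fun x hx => by rw [mem_singleton.1 hx], empty_subset _, by simp⟩
  | succ m ih =>
    obtain ⟨S, E, hvS, hS, hE, hSreach, hES, hEG⟩ := ih (by omega)
    obtain ⟨x, hx, hxS⟩ := Set.exists_mem_notMem_of_ncard_lt_ncard (s := (S : Set V))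
      (t := {x | G.Reachable v x}) (by rw [Set.ncard_coe_finset]; omega)
    obtain ⟨d, -, hfst, hsnd⟩ := hx.some.exists_boundary_dart (S : Set V) hvS hxS
    have hsnd : d.snd ∉ S := hsnd
    refine ⟨insert d.snd S, insert s(d.fst, d.snd) E, mem_insert_of_mem hvS,
      by rw [card_insert_of_notMem hsnd, hS], ?_, ?_, ?_, ?_⟩
    · rw [card_insert_of_notMem fun h => hsnd (mk_mem_sym2_iff.1 (hES h)).2, hE]
    · intro y hy
      rcases mem_insert.1 hy with rfl | hy
      exacts [(hSreach _ hfst).trans d.adj.reachable, hSreach y hy]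
    · refine insert_subset (mk_mem_sym2_iff.2 ⟨mem_insert_of_mem hfst, mem_insert_self _ _⟩) ?_
      exact hES.trans (sym2_mono (subset_insert _ _))
    · rw [coe_insert]
      exact Set.insert_subset d.adj hEG

theorem exists_finset_card_edges_of_le_ncard_component [Fintype V] {m : ℕ}
    (hV : m + 1 ≤ Fintype.card V)
    (hcomp : m ≤ {e | e ∈ G.edgeSet ∧ ∀ x ∈ e, G.Reachable v x}.ncard) :
    ∃ (S : Finset V) (E : Finset (Sym2 V)), #S = m + 1 ∧ #E = m ∧
      E ⊆ S.sym2 ∧ (E : Set (Sym2 V)) ⊆ G.edgeSet := by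
  classical
  by_cases hbig : m + 1 ≤ {x | G.Reachable v x}.ncard
  · obtain ⟨S, E, -, hS, hE, -, hES, hEG⟩ := G.exists_reachable_finset_card_edges v hbig
    exact ⟨S, E, hS, hE, hES, hEG⟩
  set W : Finset V := {x | G.Reachable v x}
  have hW : #W ≤ m + 1 := by
    rw [← Set.ncard_coe_finset, coe_filter_univ]
    omega
  obtain ⟨S, hWS, hS⟩ := exists_superset_card_eq hW hV
  set F : Finset (Sym2 V) := {e | e ∈ G.edgeSet ∧ ∀ x ∈ e, G.Reachable v x}
  obtain ⟨E, hEF, hE⟩ := exists_subset_card_eq (s := F) (n := m)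
    (by rwa [← Set.ncard_coe_finset, coe_filter_univ])
  have hEcomp (e : Sym2 V) (he : e ∈ E) : e ∈ G.edgeSet ∧ ∀ x ∈ e, G.Reachable v x :=
    (mem_filter_univ e).1 (hEF he)
  refine ⟨S, E, hS, hE, fun e he => ?_, fun e he => (hEcomp e he).1⟩
  exact mem_sym2_iff.2 fun x hx => hWS ((mem_filter_univ x).2 ((hEcomp e he).2 x hx))

end SimpleGraph

section Coloring

variable {n : ℕ} {C : Type*} {c : Sym2 (Fin n) → C} {k : C}

@[simp]
theorem mem_edgeSet_monoGraph {e : Sym2 (Fin n)} :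
    e ∈ (monoGraph c k).edgeSet ↔ ¬e.IsDiag ∧ c e = k := by
  induction e using Sym2.ind with
  | _ a b => exact Iff.and Sym2.mk_isDiag_iff.not.symm Iff.rfl

theorem numColorsOn_eq_card_image [DecidableEq C] (S : Finset (Fin n)) :
    numColorsOn c S = #({e ∈ S.sym2 | ¬e.IsDiag}.image c) := by
  rw [numColorsOn, ← Set.ncard_coe_finset, coe_image, coe_filter]

theorem numColorsOn_add_card_le_of_subset_monoGraph {S : Finset (Fin n)}
    {E : Finset (Sym2 (Fin n))} (hES : E ⊆ S.sym2)
    (hE : (E : Set (Sym2 (Fin n))) ⊆ (monoGraph c k).edgeSet) :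
    numColorsOn c S + #E ≤ (#S).choose 2 + 1 := by
  classical
  rw [numColorsOn_eq_card_image, ← card_filter_not_isDiag_sym2]
  exact card_image_add_card_le_of_eqOn
    (fun e he => mem_filter.2 ⟨hES he, (mem_edgeSet_monoGraph.1 (hE he)).1⟩)
    (fun e he => (mem_edgeSet_monoGraph.1 (hE he)).2)

end Coloring

/-- In a `(5,8)`-coloring of `K_n` (with `n ≥ 5`), every connected component of
every monochromatic subgraph has at most `3` edges. -/
theorem mono_component_at_most_three_edges (n : ℕ) (hn : 5 ≤ n) (C : Type)
    (c : Sym2 (Fin n) → C) (hc : IsPQColoring n 5 8 c) :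
    ∀ (k : C) (v : Fin n), (componentEdgeSet c k v).ncard ≤ 3 := by
  intro k v
  by_contra! hbig
  obtain ⟨S, E, hS, hE, hES, hEG⟩ :=
    (monoGraph c k).exists_finset_card_edges_of_le_ncard_component v (m := 4)
      (by simpa using hn) hbig
  have hfew := numColorsOn_add_card_le_of_subset_monoGraph hES hEG
  have hmany := hc S hS
  rw [hS, hE, show (5 : ℕ).choose 2 = 10 from rfl] at hfew
  omega
end

section
/- Let n ≥ 5 and let c be a (5,8)-coloring of K_n in which the three edges xy, xu, xv (with x, y, u, v distinct vertices) all have the same color. Then each of the edges uv, uy and vy forms a singleton monochromatic component; that is, no edge sharing a vertex with uv has the same color as uv, and similarly for uy and vy. -/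
/-- The edge `ab` forms a singleton monochromatic component: no other edge
sharing an endpoint with `ab` receives the same color as `ab`. -/
def IsSingletonMonoEdge {n : ℕ} {C : Type*} (c : Sym2 (Fin n) → C) (a b : Fin n) : Prop :=
  ∀ w : Fin n, w ≠ a → w ≠ b → c s(a, w) ≠ c s(a, b) ∧ c s(b, w) ≠ c s(a, b)

lemma five_set_bound {n : ℕ} {C : Type} (c : Sym2 (Fin n) → C) (hc : IsPQColoring n 5 8 c)
    (x p q r z : Fin n)
    (hxp : x ≠ p) (hxq : x ≠ q) (hxr : x ≠ r) (hxz : x ≠ z)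
    (hpq : p ≠ q) (hpr : p ≠ r) (hpz : p ≠ z)
    (hqr : q ≠ r) (hqz : q ≠ z) (hrz : r ≠ z)
    (hs1 : c s(x, p) = c s(x, q)) (hs2 : c s(x, p) = c s(x, r))
    (hin : c s(p, q) ∈ c '' (↑({s(x,p), s(x,z), s(p,r), s(p,z), s(q,r), s(q,z), s(r,z)} :
      Finset (Sym2 (Fin n))) : Set (Sym2 (Fin n)))) : False := by
  classical
  set T : Finset (Sym2 (Fin n)) := {s(x,p), s(x,z), s(p,r), s(p,z), s(q,r), s(q,z), s(r,z)} with hT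
  set I : Set C := c '' (↑T : Set (Sym2 (Fin n))) with hI
  have ceq : ∀ a b : Fin n, c s(a, b) = c s(b, a) := fun a b => congrArg c (Sym2.eq_swap)
  have memT : ∀ e ∈ T, c e ∈ I := fun e he => Set.mem_image_of_mem c he
  have mxp : c s(x,p) ∈ I := memT _ (by simp [hT])
  have mxz : c s(x,z) ∈ I := memT _ (by simp [hT])
  have mpr : c s(p,r) ∈ I := memT _ (by simp [hT])
  have mpz : c s(p,z) ∈ I := memT _ (by simp [hT])
  have mqr : c s(q,r) ∈ I := memT _ (by simp [hT])
  have mqz : c s(q,z) ∈ I := memT _ (by simp [hT])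
  have mrz : c s(r,z) ∈ I := memT _ (by simp [hT])
  have mxq : c s(x,q) ∈ I := hs1 ▸ mxp
  have mxr : c s(x,r) ∈ I := hs2 ▸ mxp
  have mpq : c s(p,q) ∈ I := hin
  set S : Finset (Fin n) := {x, p, q, r, z} with hS
  have hcard : S.card = 5 := by
    rw [hS]
    rw [Finset.card_insert_of_notMem (by simp [hxp, hxq, hxr, hxz]),
        Finset.card_insert_of_notMem (by simp [hpq, hpr, hpz]),
        Finset.card_insert_of_notMem (by simp [hqr, hqz]),
        Finset.card_insert_of_notMem (by simp [hrz]),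
        Finset.card_singleton]
  have hsub : c '' {e : Sym2 (Fin n) | e ∈ S.sym2 ∧ ¬ e.IsDiag} ⊆ I := by
    rintro col ⟨e, ⟨heS, hnd⟩, rfl⟩
    induction e using Sym2.ind with
    | _ i j =>
      rw [Finset.mk_mem_sym2_iff] at heS
      rw [Sym2.mk_isDiag_iff] at hnd
      obtain ⟨hi, hj⟩ := heS
      rw [hS] at hi hj
      simp only [Finset.mem_insert, Finset.mem_singleton] at hi hj
      rcases hi with rfl | rfl | rfl | rfl | rfl <;>
        rcases hj with rfl | rfl | rfl | rfl | rfl <;>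
        first
        | exact absurd rfl hnd
        | assumption
        | (rw [ceq]; assumption)
  have hfin : I.Finite := T.finite_toSet.image c
  have hle : numColorsOn c S ≤ I.ncard := Set.ncard_le_ncard hsub hfin
  have hI7 : I.ncard ≤ 7 := by
    rw [hI, ← Finset.coe_image, Set.ncard_coe_finset]
    refine le_trans Finset.card_image_le ?_
    rw [hT]
    refine le_trans (Finset.card_insert_le _ _) (Nat.succ_le_succ ?_)
    refine le_trans (Finset.card_insert_le _ _) (Nat.succ_le_succ ?_)
    refine le_trans (Finset.card_insert_le _ _) (Nat.succ_le_succ ?_)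
    refine le_trans (Finset.card_insert_le _ _) (Nat.succ_le_succ ?_)
    refine le_trans (Finset.card_insert_le _ _) (Nat.succ_le_succ ?_)
    refine le_trans (Finset.card_insert_le _ _) (Nat.succ_le_succ ?_)
    simp
  have := hc S hcard
  omega

lemma star_neq {n : ℕ} {C : Type} (hn : 5 ≤ n) (c : Sym2 (Fin n) → C) (hc : IsPQColoring n 5 8 c)
    (x p q r : Fin n)
    (hxp : x ≠ p) (hxq : x ≠ q) (hxr : x ≠ r) (hpq : p ≠ q) (hpr : p ≠ r) (hqr : q ≠ r)
    (hs1 : c s(x, p) = c s(x, q)) (hs2 : c s(x, p) = c s(x, r))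
    (w : Fin n) (hwp : w ≠ p) (hwq : w ≠ q) : c s(p, w) ≠ c s(p, q) := by
  intro h
  have ceq : ∀ a b : Fin n, c s(a, b) = c s(b, a) := fun a b => congrArg c (Sym2.eq_swap)
  have fresh : ∃ z : Fin n, z ∉ ({x, p, q, r} : Finset (Fin n)) := by
    by_contra hcon
    push_neg at hcon
    have h1 : (Finset.univ : Finset (Fin n)).card ≤ ({x, p, q, r} : Finset (Fin n)).card :=
      Finset.card_le_card (fun a _ => hcon a)
    have h4 : ({x, p, q, r} : Finset (Fin n)).card ≤ 4 := by
      refine le_trans (Finset.card_insert_le _ _) (Nat.succ_le_succ ?_)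
      refine le_trans (Finset.card_insert_le _ _) (Nat.succ_le_succ ?_)
      refine le_trans (Finset.card_insert_le _ _) (Nat.succ_le_succ ?_)
      simp
    simp only [Finset.card_univ, Fintype.card_fin] at h1
    omega
  by_cases hwx : w = x
  · rw [hwx] at h
    obtain ⟨z, hz⟩ := fresh
    simp only [Finset.mem_insert, Finset.mem_singleton, not_or] at hz
    obtain ⟨hzx, hzp, hzq, hzr⟩ := hz
    refine five_set_bound c hc x p q r z hxp hxq hxr (Ne.symm hzx) hpq hpr (Ne.symm hzp)
      hqr (Ne.symm hzq) (Ne.symm hzr) hs1 hs2 ?_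
    exact ⟨s(x, p), by simp, by rw [ceq x p, h]⟩
  · by_cases hwr : w = r
    · rw [hwr] at h
      obtain ⟨z, hz⟩ := fresh
      simp only [Finset.mem_insert, Finset.mem_singleton, not_or] at hz
      obtain ⟨hzx, hzp, hzq, hzr⟩ := hz
      refine five_set_bound c hc x p q r z hxp hxq hxr (Ne.symm hzx) hpq hpr (Ne.symm hzp)
        hqr (Ne.symm hzq) (Ne.symm hzr) hs1 hs2 ?_
      exact ⟨s(p, r), by simp, h⟩
    · refine five_set_bound c hc x p q r w hxp hxq hxr (fun e => hwx e.symm) hpq hpr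
        (Ne.symm hwp) hqr (Ne.symm hwq) (fun e => hwr e.symm) hs1 hs2 ?_
      exact ⟨s(p, w), by simp, h⟩

/-- In a `(5,8)`-coloring of `K_n` (`n ≥ 5`), if the three edges `xy`, `xu`, `xv`
of a 3-star all have the same color, then each of `uv`, `uy`, `vy` forms a
singleton monochromatic component. -/
theorem star_forces_singleton_edges (n : ℕ) (hn : 5 ≤ n) (C : Type)
    (c : Sym2 (Fin n) → C) (hc : IsPQColoring n 5 8 c) (x y u v : Fin n)
    (hxy : x ≠ y) (hxu : x ≠ u) (hxv : x ≠ v) (hyu : y ≠ u) (hyv : y ≠ v) (huv : u ≠ v)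
    (h1 : c s(x, y) = c s(x, u)) (h2 : c s(x, y) = c s(x, v)) :
    IsSingletonMonoEdge c u v ∧ IsSingletonMonoEdge c u y ∧ IsSingletonMonoEdge c v y := by
  have ceq : ∀ a b : Fin n, c s(a, b) = c s(b, a) := fun a b => congrArg c (Sym2.eq_swap)
  refine ⟨fun w hwu hwv => ⟨?_, ?_⟩, fun w hwu hwy => ⟨?_, ?_⟩, fun w hwv hwy => ⟨?_, ?_⟩⟩
  · exact star_neq hn c hc x u v y hxu hxv hxy huv (Ne.symm hyu) (Ne.symm hyv)
      (h1 ▸ h2) (h1 ▸ rfl) w hwu hwv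
  · rw [ceq u v]
    exact star_neq hn c hc x v u y hxv hxu hxy (Ne.symm huv) (Ne.symm hyv) (Ne.symm hyu)
      (h2 ▸ h1) (h2 ▸ rfl) w hwv hwu
  · exact star_neq hn c hc x u y v hxu hxy hxv (Ne.symm hyu) huv hyv
      (h1 ▸ rfl) (h1 ▸ h2) w hwu hwy
  · rw [ceq u y]
    exact star_neq hn c hc x y u v hxy hxu hxv hyu hyv huv h1 h2 w hwy hwu
  · exact star_neq hn c hc x v y u hxv hxy hxu (Ne.symm hyv) (Ne.symm huv) hyu
      (h2 ▸ rfl) (h2 ▸ h1) w hwv hwy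
  · rw [ceq v y]
    exact star_neq hn c hc x y v u hxy hxv hxu hyv hyu (Ne.symm huv) h2 h1 w hwy hwv
end

section
/- Let n ≥ 6 and let c be a (5,8)-coloring of K_n. If S₁ and S₂ are two distinct monochromatic components each of which is a star with 3 edges (on 4 vertices), then the vertex sets of S₁ and S₂ share at most one vertex. -/
open Finset

namespace Finset

variable {α β : Type*} [DecidableEq β]

theorem card_image_lt_of_map_eq {f : α → β} {s : Finset α} {a b : α} (ha : a ∈ s) (hb : b ∈ s)
    (hab : a ≠ b) (hf : f a = f b) : #(s.image f) < #s :=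
  card_image_le.lt_of_ne fun h => hab (card_image_iff.1 h ha hb hf)

theorem image_erase_of_map_eq [DecidableEq α] {f : α → β} {s : Finset α} {a b : α} (hb : b ∈ s)
    (hab : b ≠ a) (hf : f a = f b) : (s.erase a).image f = s.image f := by
  refine (image_subset_image (erase_subset a s)).antisymm fun y hy => ?_
  obtain ⟨z, hz, rfl⟩ := mem_image.1 hy
  by_cases hza : z = a
  · exact mem_image.2 ⟨b, mem_erase.2 ⟨hab, hb⟩, by rw [hza, hf]⟩
  · exact mem_image_of_mem f (mem_erase.2 ⟨hza, hz⟩)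

theorem notMem_and_card_eq_of_card_insert [DecidableEq α] {x : α} {s : Finset α} {m : ℕ}
    (hs : #s ≤ m) (h : #(insert x s) = m + 1) : x ∉ s ∧ #s = m := by
  by_cases hx : x ∈ s
  · rw [insert_eq_of_mem hx] at h
    omega
  · rw [card_insert_of_notMem hx] at h
    exact ⟨hx, by omega⟩

end Finset

section Edges

variable {α C : Type*} [DecidableEq α]

def edgesIn (S : Finset α) : Finset (Sym2 α) := {e ∈ S.sym2 | ¬ e.IsDiag}

@[simp]
theorem mk_mem_edgesIn {S : Finset α} {u v : α} : s(u, v) ∈ edgesIn S ↔ u ∈ S ∧ v ∈ S ∧ u ≠ v := by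
  simp [edgesIn, and_assoc]

theorem card_edgesIn (S : Finset α) : #(edgesIn S) = (#S).choose 2 := by
  rw [edgesIn, sym2_eq_image, Sym2.filter_image_mk_not_isDiag, Sym2.card_image_offDiag]

def IsMonoStar (c : Sym2 α → C) (k : C) (x : α) (L : Finset α) : Prop :=
  x ∉ L ∧ ∀ w ∈ L, c s(x, w) = k

end Edges

section Coloring

variable {n p q : ℕ} {C : Type*} [DecidableEq C] {c : Sym2 (Fin n) → C} {k k' : C}
  {x x' : Fin n} {L L' S : Finset (Fin n)}

theorem numColorsOn_eq_card_image_s9 : numColorsOn c S = #((edgesIn S).image c) := by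
  rw [numColorsOn, ← Set.ncard_coe_finset, coe_image]
  congr 2
  ext e
  simp [edgesIn]

/-- Two of the star's edges repeat a color, which uses up the whole allowance of
`p.choose 2 - q ≤ 2` repetitions: every other edge of `S` has a color of its own. -/
theorem IsPQColoring.eq_of_color_eq (hc : IsPQColoring n p q c) (hpq : p.choose 2 ≤ q + 2)
    (hstar : IsMonoStar c k x L) (hL : 2 < #L) (hS : #S = p) (hTS : insert x L ⊆ S)
    {e₁ e₂ : Sym2 (Fin n)} (he₁ : e₁ ∈ edgesIn S) (he₂ : e₂ ∈ edgesIn S)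
    (he₁L : ∀ w ∈ L, e₁ ≠ s(x, w)) (hce : c e₁ = c e₂) : e₁ = e₂ := by
  by_contra hne
  obtain ⟨hxL, hcol⟩ := hstar
  obtain ⟨a, ha, b, hb, d, hd, hab, had, hbd⟩ := two_lt_card.1 hL
  have hstar_mem : ∀ w ∈ L, s(x, w) ∈ edgesIn S := fun w hw =>
    mk_mem_edgesIn.2 ⟨hTS (mem_insert_self x L), hTS (mem_insert_of_mem hw),
      fun h => hxL (h ▸ hw)⟩
  have hxb_ne_xa : s(x, b) ≠ s(x, a) := fun h => hab (Sym2.congr_right.1 h).symm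
  have hxd_ne_xa : s(x, d) ≠ s(x, a) := fun h => had (Sym2.congr_right.1 h).symm
  have hxd_ne_xb : s(x, d) ≠ s(x, b) := fun h => hbd (Sym2.congr_right.1 h).symm
  set E' := ((edgesIn S).erase s(x, a)).erase s(x, b)
  have hmem : ∀ e ∈ edgesIn S, e ≠ s(x, a) → e ≠ s(x, b) → e ∈ E' := fun e he h₁ h₂ =>
    mem_erase.2 ⟨h₂, mem_erase.2 ⟨h₁, he⟩⟩
  have hxd : s(x, d) ∈ E' := hmem _ (hstar_mem d hd) hxd_ne_xa hxd_ne_xb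
  have hcard : #E' + 2 = p.choose 2 := by
    rw [← hS, ← card_edgesIn, ← card_erase_add_one (hstar_mem a ha),
      ← card_erase_add_one (mem_erase.2 ⟨hxb_ne_xa, hstar_mem b hb⟩)]
  have himage : E'.image c = (edgesIn S).image c := by
    rw [image_erase_of_map_eq (mem_erase.2 ⟨hxd_ne_xa, hstar_mem d hd⟩) hxd_ne_xb
        (by rw [hcol b hb, hcol d hd]),
      image_erase_of_map_eq (hstar_mem d hd) hxd_ne_xa (by rw [hcol a ha, hcol d hd])]
  -- `e₁` still collides with an edge of `E'`: `e₂` itself, or the star edge `s(x, d)`.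
  obtain ⟨e, heE', hne', hce'⟩ : ∃ e ∈ E', e ≠ e₁ ∧ c e = c e₁ := by
    by_cases h : e₂ = s(x, a) ∨ e₂ = s(x, b)
    · refine ⟨s(x, d), hxd, fun h' => he₁L d hd h'.symm, ?_⟩
      rw [hce, hcol d hd]
      rcases h with rfl | rfl
      exacts [(hcol a ha).symm, (hcol b hb).symm]
    · push Not at h
      exact ⟨e₂, hmem e₂ he₂ h.1 h.2, Ne.symm hne, hce.symm⟩
  have hlt := card_image_lt_of_map_eq heE' (hmem e₁ he₁ (he₁L a ha) (he₁L b hb)) hne' hce'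
  have := hc S hS
  rw [numColorsOn_eq_card_image_s9, ← himage] at this
  omega

theorem IsPQColoring.eq_center_of_color_eq (hc : IsPQColoring n p q c) (hpq : p.choose 2 ≤ q + 2)
    (hstar : IsMonoStar c k x L) (hL : 2 < #L) (hS : #S = p) (hTS : insert x L ⊆ S)
    {y w₁ w₂ : Fin n} (hy : y ∈ S) (hw₁ : w₁ ∈ S) (hw₂ : w₂ ∈ S) (hyw₁ : y ≠ w₁) (hyw₂ : y ≠ w₂)
    (hw : w₁ ≠ w₂) (hcw : c s(y, w₁) = c s(y, w₂)) : y = x ∧ w₁ ∈ L := by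
  have hstar_edge : ∀ {u v : Fin n}, u ∈ S → v ∈ S → y ≠ u → y ≠ v → u ≠ v →
      c s(y, u) = c s(y, v) → ∃ l ∈ L, s(y, u) = s(x, l) := by
    intro u v hu hv hyu hyv huv hcuv
    by_contra! h
    exact huv (Sym2.congr_right.1 (hc.eq_of_color_eq hpq hstar hL hS hTS
      (mk_mem_edgesIn.2 ⟨hy, hu, hyu⟩) (mk_mem_edgesIn.2 ⟨hy, hv, hyv⟩) h hcuv))
  obtain ⟨l₁, hl₁, h₁⟩ := hstar_edge hw₁ hw₂ hyw₁ hyw₂ hw hcw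
  obtain ⟨l₂, -, h₂⟩ := hstar_edge hw₂ hw₁ hyw₂ hyw₁ hw.symm hcw.symm
  rcases Sym2.eq_iff.1 h₁ with ⟨rfl, rfl⟩ | ⟨rfl, rfl⟩
  · exact ⟨rfl, hl₁⟩
  · rcases Sym2.eq_iff.1 h₂ with ⟨rfl, -⟩ | ⟨-, rfl⟩
    exacts [absurd hl₁ hstar.1, absurd rfl hw]

theorem IsPQColoring.eq_center_of_mem_insert (hc : IsPQColoring n 5 8 c)
    (hstar : IsMonoStar c k x L) (hL : #L = 3) (hstar' : IsMonoStar c k' x' L')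
    {z w₁ w₂ : Fin n} (hz : z ∉ insert x L) (hx' : x' ∈ insert z (insert x L))
    (hw₁ : w₁ ∈ L') (hw₂ : w₂ ∈ L') (hw₁S : w₁ ∈ insert z (insert x L))
    (hw₂S : w₂ ∈ insert z (insert x L)) (hw : w₁ ≠ w₂) : x' = x ∧ w₁ ∈ L :=
  hc.eq_center_of_color_eq (by decide) hstar (by omega)
    (by rw [card_insert_of_notMem hz, card_insert_of_notMem hstar.1, hL]) (subset_insert _ _)
    hx' hw₁S hw₂S (fun h => hstar'.1 (h ▸ hw₁)) (fun h => hstar'.1 (h ▸ hw₂)) hw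
    (by rw [hstar'.2 _ hw₁, hstar'.2 _ hw₂])

theorem IsPQColoring.center_mem_of_one_lt_card_inter (hc : IsPQColoring n 5 8 c)
    (hstar : IsMonoStar c k x L) (hL : #L = 3) (hstar' : IsMonoStar c k' x' L')
    (hlt : 1 < #(insert x L ∩ insert x' L')) : x' ∈ insert x L := by
  by_contra hx'
  obtain ⟨u, hu, v, hv, huv⟩ := one_lt_card.1 hlt
  have hleaf : ∀ {u}, u ∈ insert x L ∩ insert x' L' → u ∈ L' := fun hu =>
    (mem_insert.1 (mem_inter.1 hu).2).resolve_left fun h => hx' (h ▸ (mem_inter.1 hu).1)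
  obtain ⟨rfl, -⟩ := hc.eq_center_of_mem_insert hstar hL hstar' hx' (mem_insert_self _ _)
    (hleaf hu) (hleaf hv) (mem_insert_of_mem (mem_inter.1 hu).1)
    (mem_insert_of_mem (mem_inter.1 hv).1) huv
  exact hx' (mem_insert_self _ _)

theorem IsPQColoring.leaves_subset_of_one_lt_card_inter (hc : IsPQColoring n 5 8 c)
    (hstar : IsMonoStar c k x L) (hL : #L = 3) (hstar' : IsMonoStar c k' x' L')
    (hx' : x' ∈ insert x L) (hlt : 1 < #(insert x L ∩ insert x' L')) : L' ⊆ insert x L := by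
  by_contra hL'
  obtain ⟨q, hqL', hqT⟩ := not_subset.1 hL'
  obtain ⟨p, hp, hpx'⟩ := exists_mem_ne hlt x'
  obtain ⟨hpT, hpT'⟩ := mem_inter.1 hp
  exact hqT (mem_insert_of_mem (hc.eq_center_of_mem_insert hstar hL hstar' hqT
    (mem_insert_of_mem hx') hqL' ((mem_insert.1 hpT').resolve_left hpx') (mem_insert_self q _)
    (mem_insert_of_mem hpT) (fun h => hqT (h ▸ hpT))).2)

theorem IsPQColoring.center_eq_and_color_eq_of_subset (hc : IsPQColoring n 5 8 c) (hn : 4 < n)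
    (hstar : IsMonoStar c k x L) (hL : #L = 3) (hstar' : IsMonoStar c k' x' L') (hL' : 1 < #L')
    (hT : insert x' L' ⊆ insert x L) : x' = x ∧ k' = k := by
  obtain ⟨hx', hL'T⟩ := insert_subset_iff.1 hT
  obtain ⟨z, -, hz⟩ := exists_mem_notMem_of_card_lt_card (s := insert x L) (t := univ)
    (by rw [card_insert_of_notMem hstar.1, hL, card_univ, Fintype.card_fin]; omega)
  obtain ⟨w₁, hw₁⟩ := card_pos.1 (by omega : 0 < #L')
  obtain ⟨w₂, hw₂, hw⟩ := exists_mem_ne hL' w₁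
  obtain ⟨rfl, hw₁L⟩ := hc.eq_center_of_mem_insert hstar hL hstar' hz (mem_insert_of_mem hx')
    hw₁ hw₂ (mem_insert_of_mem (hL'T hw₁)) (mem_insert_of_mem (hL'T hw₂)) hw.symm
  exact ⟨rfl, (hstar'.2 w₁ hw₁).symm.trans (hstar.2 w₁ hw₁L)⟩

end Coloring

/-- In a `(5,8)`-coloring of `K_n` (`n ≥ 6`), two distinct monochromatic
3-star components (one with center `x`, leaves `a, b, d`, in color `k`; the other
with center `x'`, leaves `a', b', d'`, in color `k'`) share at most one vertex. -/
theorem mono_three_stars_share_at_most_one_vertex (n : ℕ) (hn : 6 ≤ n) (C : Type)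
    (c : Sym2 (Fin n) → C) (hc : IsPQColoring n 5 8 c) (k k' : C)
    (x a b d x' a' b' d' : Fin n)
    (hcard : ({x, a, b, d} : Finset (Fin n)).card = 4)
    (hcard' : ({x', a', b', d'} : Finset (Fin n)).card = 4)
    (hs1 : c s(x, a) = k) (hs2 : c s(x, b) = k) (hs3 : c s(x, d) = k)
    (hs1' : c s(x', a') = k') (hs2' : c s(x', b') = k') (hs3' : c s(x', d') = k')
    (hdistinct : ¬ (k = k' ∧ ({x, a, b, d} : Finset (Fin n)) = {x', a', b', d'})) :
    (({x, a, b, d} : Finset (Fin n)) ∩ ({x', a', b', d'} : Finset (Fin n))).card ≤ 1 := by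
  classical
  obtain ⟨hxL, hL⟩ := notMem_and_card_eq_of_card_insert card_le_three hcard
  obtain ⟨hxL', hL'⟩ := notMem_and_card_eq_of_card_insert card_le_three hcard'
  have hstar : IsMonoStar c k x {a, b, d} := ⟨hxL, by simp [hs1, hs2, hs3]⟩
  have hstar' : IsMonoStar c k' x' {a', b', d'} := ⟨hxL', by simp [hs1', hs2', hs3']⟩
  by_contra! hlt
  have hx' := hc.center_mem_of_one_lt_card_inter hstar hL hstar' hlt
  have hT := insert_subset hx' (hc.leaves_subset_of_one_lt_card_inter hstar hL hstar' hx' hlt)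
  obtain ⟨rfl, rfl⟩ :=
    hc.center_eq_and_color_eq_of_subset (by omega) hstar hL hstar' (by omega) hT
  exact hdistinct ⟨rfl, (eq_of_subset_of_card_le hT (hcard.trans hcard'.symm).le).symm⟩
end

section
/- Let n ≥ 5. Every (5,8)-coloring of K_n is also a (4,4)-coloring; that is, every set of 4 vertices spans edges with at least 4 distinct colors (equivalently, every 4-vertex set has at most 2 color repetitions). -/
/-! Adding a vertex `v` to a set `S` adds only the `|S|` edges from `v` to `S`, hence at most
`|S|` new colors. So on `K_n` with `n > p`, a `(p+1, q)`-coloring is a `(p, q-p)`-coloring. -/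

theorem numColorsOn_insert_le {n : ℕ} {C : Type*} (c : Sym2 (Fin n) → C) (S : Finset (Fin n))
    (v : Fin n) : numColorsOn c (insert v S) ≤ numColorsOn c S + S.card := by
  set edges : Set (Sym2 (Fin n)) := {e | e ∈ S.sym2 ∧ ¬ e.IsDiag}
  set spokes : Set (Sym2 (Fin n)) := (fun u => s(v, u)) '' ↑S
  have hsub : {e : Sym2 (Fin n) | e ∈ (insert v S).sym2 ∧ ¬ e.IsDiag} ⊆ edges ∪ spokes := by
    rintro e ⟨he, hdiag⟩
    rw [Finset.sym2_insert, Finset.mem_union, Finset.mem_image] at he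
    rcases he with ⟨u, hu, rfl⟩ | he
    · rcases Finset.mem_insert.1 hu with rfl | hu
      · exact absurd (Sym2.mk_isDiag_iff.2 rfl) hdiag
      · exact Or.inr ⟨u, hu, rfl⟩
    · exact Or.inl ⟨he, hdiag⟩
  have hspokes : spokes.ncard ≤ S.card :=
    (Set.ncard_image_le S.finite_toSet).trans (Set.ncard_coe_finset S).le
  calc numColorsOn c (insert v S)
      ≤ (c '' (edges ∪ spokes)).ncard :=
        Set.ncard_le_ncard (Set.image_mono hsub) (Set.toFinite _)
    _ ≤ (c '' edges).ncard + (c '' spokes).ncard := by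
        rw [Set.image_union]; exact Set.ncard_union_le _ _
    _ ≤ numColorsOn c S + S.card :=
        Nat.add_le_add_left ((Set.ncard_image_le (Set.toFinite _)).trans hspokes) _

theorem IsPQColoring.of_succ {n p q : ℕ} {C : Type*} {c : Sym2 (Fin n) → C}
    (hc : IsPQColoring n (p + 1) q c) (hp : p < n) : IsPQColoring n p (q - p) c := by
  intro S hS
  obtain ⟨v, -, hv⟩ := Finset.exists_mem_notMem_of_card_lt_card (s := S) (t := Finset.univ)
    (by simpa [hS] using hp)
  have hcolors := hc (insert v S) (by rw [Finset.card_insert_of_notMem hv, hS])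
  have hinsert := numColorsOn_insert_le c S v
  omega

/-- For `n ≥ 5`, every `(5,8)`-coloring of `K_n` is also a `(4,4)`-coloring:
every set of `4` vertices spans edges with at least `4` distinct colors. -/
theorem five_eight_coloring_is_four_four (n : ℕ) (hn : 5 ≤ n) (C : Type)
    (c : Sym2 (Fin n) → C) (hc : IsPQColoring n 5 8 c) :
    IsPQColoring n 4 4 c :=
  hc.of_succ (p := 4) (by omega)
end

section
/- Let n ≥ 5 and let H be a 3-uniform hypergraph on n vertices that is (5,3)-free, i.e., every set of 5 vertices contains at most 2 edges of H. Then the number of edges of H is at most (2/5)·binom(n,2), and in particular at most n²/5. -/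
/-- A family of edges on `Fin n` is `(s,k)`-free if every set of `s` vertices
contains fewer than `k` of the edges. Here we use the `(5,3)`-free case:
every set of `5` vertices contains at most `2` edges. -/
def IsFiveThreeFree {n : ℕ} (H : Finset (Finset (Fin n))) : Prop :=
  ∀ S : Finset (Fin n), S.card = 5 → (H.filter (fun e => e ⊆ S)).card ≤ 2

namespace FiveThreeAux

open Finset

variable {n : ℕ} {H : Finset (Finset (Fin n))}

/-- codegree of a pair -/
def deg (H : Finset (Finset (Fin n))) (p : Finset (Fin n)) : ℕ :=
  (H.filter (fun e => p ⊆ e)).card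

/-- No 5 vertices contain 3 distinct edges. -/
lemma no_three_edges (hn : 5 ≤ n) (hfree : IsFiveThreeFree H)
    {e1 e2 e3 : Finset (Fin n)} (he1 : e1 ∈ H) (he2 : e2 ∈ H) (he3 : e3 ∈ H)
    (h12 : e1 ≠ e2) (h13 : e1 ≠ e3) (h23 : e2 ≠ e3)
    (hcard : (e1 ∪ e2 ∪ e3).card ≤ 5) : False := by
  obtain ⟨S, hS, hScard⟩ := Finset.exists_superset_card_eq hcard (by simpa using hn)
  have h2 := hfree S hScard
  have hsub : ({e1, e2, e3} : Finset (Finset (Fin n))) ⊆ H.filter (fun e => e ⊆ S) := by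
    intro e he
    simp only [mem_insert, mem_singleton] at he
    have he1S : e1 ⊆ S := (subset_union_left.trans subset_union_left).trans hS
    have he2S : e2 ⊆ S := (subset_union_right.trans subset_union_left).trans hS
    have he3S : e3 ⊆ S := subset_union_right.trans hS
    rcases he with rfl | rfl | rfl <;> exact mem_filter.2 ⟨‹_›, ‹_›⟩
  have h3' : 3 ≤ (H.filter (fun e => e ⊆ S)).card := by
    refine le_trans (le_of_eq ?_) (card_le_card hsub)
    rw [card_insert_of_notMem (by simp [h12, h13]),
      card_insert_of_notMem (by simp [h23]), card_singleton]
  omega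

lemma union_card_le {p q e1 e2 e3 : Finset (Fin n)} (hp : p.card = 2) (hq : q.card = 2)
    (h1 : e1.card = 3) (h2 : e2.card = 3) (h3 : e3.card = 3)
    (hpe1 : p ⊆ e1) (hqe1 : q ⊆ e1) (hpe2 : p ⊆ e2) (hqe3 : q ⊆ e3) :
    (e1 ∪ e2 ∪ e3).card ≤ 5 := by
  have hsub : e1 ∪ e2 ∪ e3 ⊆ e1 ∪ (e2 \ p) ∪ (e3 \ q) := by
    intro x hx
    simp only [mem_union, mem_sdiff] at hx ⊢
    rcases hx with (hx | hx) | hx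
    · exact Or.inl (Or.inl hx)
    · by_cases hxp : x ∈ p
      · exact Or.inl (Or.inl (hpe1 hxp))
      · exact Or.inl (Or.inr ⟨hx, hxp⟩)
    · by_cases hxq : x ∈ q
      · exact Or.inl (Or.inl (hqe1 hxq))
      · exact Or.inr ⟨hx, hxq⟩
  have hc2 : (e2 \ p).card = 1 := by rw [card_sdiff_of_subset hpe2, h2, hp]
  have hc3 : (e3 \ q).card = 1 := by rw [card_sdiff_of_subset hqe3, h3, hq]
  calc (e1 ∪ e2 ∪ e3).card ≤ (e1 ∪ (e2 \ p) ∪ (e3 \ q)).card := card_le_card hsub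
    _ ≤ (e1 ∪ (e2 \ p)).card + (e3 \ q).card := card_union_le _ _
    _ ≤ e1.card + (e2 \ p).card + (e3 \ q).card := by
        have := card_union_le e1 (e2 \ p); omega
    _ ≤ 5 := by omega

lemma deg_le_two (hn : 5 ≤ n) (hfree : IsFiveThreeFree H)
    (h3 : ∀ e ∈ H, e.card = 3) {p : Finset (Fin n)} (hp : p.card = 2) :
    deg H p ≤ 2 := by
  by_contra hlt
  push_neg at hlt
  obtain ⟨t, ht, htc⟩ := Finset.exists_subset_card_eq (show 3 ≤ _ from hlt)
  obtain ⟨e1, e2, e3, h12, h13, h23, rfl⟩ := Finset.card_eq_three.1 htc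
  have m1 := ht (show e1 ∈ ({e1, e2, e3} : Finset _) by simp)
  have m2 := ht (show e2 ∈ ({e1, e2, e3} : Finset _) by simp)
  have m3 := ht (show e3 ∈ ({e1, e2, e3} : Finset _) by simp)
  rw [mem_filter] at m1 m2 m3
  exact no_three_edges hn hfree m1.1 m2.1 m3.1 h12 h13 h23
    (union_card_le hp hp (h3 _ m1.1) (h3 _ m2.1) (h3 _ m3.1) m1.2 m1.2 m2.2 m3.2)

/-- If `p` is a pair in two distinct edges, any other pair `q` inside one of
those edges has codegree exactly 1. -/
lemma deg_eq_one (hn : 5 ≤ n) (hfree : IsFiveThreeFree H)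
    (h3 : ∀ e ∈ H, e.card = 3) {p q e1 e2 : Finset (Fin n)}
    (hp : p.card = 2) (hq : q.card = 2)
    (he1 : e1 ∈ H) (he2 : e2 ∈ H) (hne : e1 ≠ e2)
    (hpe1 : p ⊆ e1) (hpe2 : p ⊆ e2) (hqe1 : q ⊆ e1) (hqp : q ≠ p) :
    deg H q = 1 := by
  have hqe2 : ¬ q ⊆ e2 := by
    intro hqe2
    have hpq : p ∪ q ⊆ e1 := union_subset hpe1 hqe1
    have hcard : (p ∪ q).card = 3 := by
      have hle : (p ∪ q).card ≤ 3 := (h3 _ he1) ▸ card_le_card hpq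
      have hge : p.card < (p ∪ q).card := by
        apply card_lt_card
        rw [Finset.ssubset_iff_of_subset subset_union_left]
        obtain ⟨x, hxq, hxp⟩ : ∃ x ∈ q, x ∉ p := by
          by_contra hc
          push_neg at hc
          exact hqp (Finset.eq_of_subset_of_card_le hc (by omega))
        exact ⟨x, mem_union_right _ hxq, hxp⟩
      omega
    have : e1 = e2 := by
      have h1 : p ∪ q = e1 := Finset.eq_of_subset_of_card_le hpq (by rw [hcard, h3 _ he1])
      have h2' : p ∪ q ⊆ e2 := union_subset hpe2 hqe2
      exact (h1 ▸ Finset.eq_of_subset_of_card_le h2' (by rw [hcard, h3 _ he2])).symm ▸ rfl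
    exact hne this
  have hfilter : H.filter (fun e => q ⊆ e) = {e1} := by
    ext f
    simp only [mem_filter, mem_singleton]
    constructor
    · rintro ⟨hf, hqf⟩
      by_contra hfe1
      have hfe2 : f ≠ e2 := fun h => hqe2 (h ▸ hqf)
      exact no_three_edges hn hfree he1 he2 hf hne (Ne.symm hfe1) (Ne.symm hfe2)
        (union_card_le hp hq (h3 _ he1) (h3 _ he2) (h3 _ hf) hpe1 hqe1 hpe2 hqf)
    · rintro rfl; exact ⟨he1, hqe1⟩
  rw [deg, hfilter, card_singleton]

/-- Two distinct codegree-≥2 pairs cannot lie in a common edge. -/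
lemma no_common_edge (hn : 5 ≤ n) (hfree : IsFiveThreeFree H)
    (h3 : ∀ e ∈ H, e.card = 3) {p p' e : Finset (Fin n)}
    (hp : p.card = 2) (hp' : p'.card = 2) (hne : p ≠ p')
    (hd : 2 ≤ deg H p) (hd' : 2 ≤ deg H p')
    (he : e ∈ H) (hpe : p ⊆ e) (hp'e : p' ⊆ e) : False := by
  obtain ⟨e2, he2, he2ne⟩ := Finset.exists_mem_ne (show 1 < _ from hd) e
  rw [mem_filter] at he2
  have := deg_eq_one hn hfree h3 hp hp' he he2.1 (Ne.symm he2ne) hpe he2.2 hp'e (Ne.symm hne)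
  omega

end FiveThreeAux


open Finset FiveThreeAux in
/-- If `H` is a `(5,3)`-free `3`-uniform hypergraph on `n ≥ 5` vertices, then
`|E(H)| ≤ (2/5)·C(n,2) ≤ n²/5`. -/
theorem five_three_free_upper_bound (n : ℕ) (hn : 5 ≤ n) (H : Finset (Finset (Fin n)))
    (h3 : ∀ e ∈ H, e.card = 3) (hfree : IsFiveThreeFree H) :
    (H.card : ℝ) ≤ (2 / 5) * (n.choose 2 : ℝ) ∧ (H.card : ℝ) ≤ (n : ℝ) ^ 2 / 5 := by
  classical
  -- the set of all pairs
  set A : Finset (Finset (Fin n)) := Finset.univ.powersetCard 2 with hA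
  have hmemA : ∀ p : Finset (Fin n), p ∈ A ↔ p.card = 2 := by
    intro p; simp [hA, Finset.mem_powersetCard]
  have hAcard : A.card = n.choose 2 := by
    rw [hA, Finset.card_powersetCard, Finset.card_univ, Fintype.card_fin]
  -- double counting: the sum of codegrees is 3|H|
  have hsum : ∑ p ∈ A, deg H p = 3 * H.card := by
    have hfib : ∀ e ∈ H, (A.filter (fun p => p ⊆ e)).card = 3 := by
      intro e he
      have heq : A.filter (fun p => p ⊆ e) = e.powersetCard 2 := by
        ext p
        simp only [Finset.mem_filter, hmemA p, Finset.mem_powersetCard]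
        tauto
      rw [heq, Finset.card_powersetCard, h3 e he]; rfl
    calc ∑ p ∈ A, deg H p
        = ∑ p ∈ A, ∑ e ∈ H, if p ⊆ e then 1 else 0 :=
          Finset.sum_congr rfl fun p _ => Finset.card_filter _ _
      _ = ∑ e ∈ H, ∑ p ∈ A, if p ⊆ e then 1 else 0 := Finset.sum_comm
      _ = ∑ e ∈ H, (A.filter (fun p => p ⊆ e)).card :=
          Finset.sum_congr rfl fun e _ => (Finset.card_filter _ _).symm
      _ = ∑ e ∈ H, 3 := Finset.sum_congr rfl hfib
      _ = 3 * H.card := by rw [Finset.sum_const, smul_eq_mul, mul_comm]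
  set P1 : Finset (Finset (Fin n)) := A.filter (fun p => deg H p = 1) with hP1
  set P2 : Finset (Finset (Fin n)) := A.filter (fun p => 2 ≤ deg H p) with hP2
  -- sum of codegrees is at most m1 + 2 m2
  have hbound : ∑ p ∈ A, deg H p ≤ P1.card + 2 * P2.card := by
    have hpt : ∀ p ∈ A, deg H p ≤
        (if deg H p = 1 then 1 else 0) + (if 2 ≤ deg H p then 2 else 0) := by
      intro p hp
      have := deg_le_two hn hfree h3 ((hmemA p).1 hp)
      split_ifs <;> omega
    calc ∑ p ∈ A, deg H p
        ≤ ∑ p ∈ A, ((if deg H p = 1 then 1 else 0) + (if 2 ≤ deg H p then 2 else 0)) :=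
          Finset.sum_le_sum hpt
      _ = P1.card + 2 * P2.card := by
          rw [Finset.sum_add_distrib, ← Finset.sum_filter, ← Finset.sum_filter]
          rw [Finset.sum_const, Finset.sum_const]
          rw [hP1, hP2]; simp [mul_comm]
  -- P1 and P2 are disjoint subsets of A
  have hPle : P1.card + P2.card ≤ n.choose 2 := by
    have hdisj : Disjoint P1 P2 := by
      rw [Finset.disjoint_left]
      intro p h1 h2
      rw [hP1, Finset.mem_filter] at h1
      rw [hP2, Finset.mem_filter] at h2
      omega
    calc P1.card + P2.card = (P1 ∪ P2).card := (Finset.card_union_of_disjoint hdisj).symm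
      _ ≤ A.card := Finset.card_le_card (Finset.union_subset
          (Finset.filter_subset _ _) (Finset.filter_subset _ _))
      _ = n.choose 2 := hAcard
  -- companion pairs
  set Q : Finset (Fin n) → Finset (Finset (Fin n)) :=
    fun p => P1.filter (fun q => ∃ e ∈ H, p ⊆ e ∧ q ⊆ e) with hQ
  have hQsub : P2.biUnion Q ⊆ P1 :=
    Finset.biUnion_subset.2 fun p _ => Finset.filter_subset _ _
  have hQdisj : ∀ p ∈ P2, ∀ p' ∈ P2, p ≠ p' → Disjoint (Q p) (Q p') := by
    intro p hp p' hp' hne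
    rw [hP2, Finset.mem_filter] at hp hp'
    rw [Finset.disjoint_left]
    intro q hq hq'
    rw [hQ] at hq hq'
    simp only [Finset.mem_filter] at hq hq'
    obtain ⟨hq1, e, he, hpe, hqe⟩ := hq
    obtain ⟨_, e', he', hp'e', hqe'⟩ := hq'
    rw [hP1, Finset.mem_filter] at hq1
    have hee' : e = e' := by
      have h1 : e ∈ H.filter (fun f => q ⊆ f) := Finset.mem_filter.2 ⟨he, hqe⟩
      have h2 : e' ∈ H.filter (fun f => q ⊆ f) := Finset.mem_filter.2 ⟨he', hqe'⟩
      exact Finset.card_le_one.1 (le_of_eq hq1.2) _ h1 _ h2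
    exact no_common_edge hn hfree h3 ((hmemA p).1 hp.1) ((hmemA p').1 hp'.1) hne
      hp.2 hp'.2 he hpe (hee' ▸ hp'e')
  -- each codegree-2 pair has at least 4 companions
  have hQ4 : ∀ p ∈ P2, 4 ≤ (Q p).card := by
    intro p hp
    rw [hP2, Finset.mem_filter] at hp
    obtain ⟨hpA, hpd⟩ := hp
    have hpc : p.card = 2 := (hmemA p).1 hpA
    obtain ⟨e1, he1m, e2, he2m, hne⟩ := Finset.one_lt_card.1 hpd
    rw [Finset.mem_filter] at he1m he2m
    obtain ⟨he1, hpe1⟩ := he1m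
    obtain ⟨he2, hpe2⟩ := he2m
    have h1c : (e1 \ p).card = 1 := by rw [Finset.card_sdiff_of_subset hpe1, h3 _ he1, hpc]
    have h2c : (e2 \ p).card = 1 := by rw [Finset.card_sdiff_of_subset hpe2, h3 _ he2, hpc]
    obtain ⟨a, ha⟩ := Finset.card_eq_one.1 h1c
    obtain ⟨b, hb⟩ := Finset.card_eq_one.1 h2c
    have hamem := Finset.mem_sdiff.1 (ha ▸ Finset.mem_singleton_self a)
    have hbmem := Finset.mem_sdiff.1 (hb ▸ Finset.mem_singleton_self b)
    have hab : a ≠ b := by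
      rintro rfl
      apply hne
      rw [← Finset.union_sdiff_of_subset hpe1, ← Finset.union_sdiff_of_subset hpe2, ha, hb]
    obtain ⟨x, y, hxy, rfl⟩ := Finset.card_eq_two.1 hpc
    have hax : a ≠ x := fun h => hamem.2 (by simp [h])
    have hay : a ≠ y := fun h => hamem.2 (by simp [h])
    have hbx : b ≠ x := fun h => hbmem.2 (by simp [h])
    have hby : b ≠ y := fun h => hbmem.2 (by simp [h])
    have hxe1 : x ∈ e1 := hpe1 (by simp)
    have hye1 : y ∈ e1 := hpe1 (by simp)
    have hxe2 : x ∈ e2 := hpe2 (by simp)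
    have hye2 : y ∈ e2 := hpe2 (by simp)
    -- the four companion pairs
    have hmemQ : ∀ u v : Fin n, u ≠ v → ({u, v} : Finset (Fin n)) ≠ {x, y} →
        ∀ e3 e4, e3 ∈ H → e4 ∈ H → e3 ≠ e4 →
        ({x, y} : Finset (Fin n)) ⊆ e3 → ({x, y} : Finset (Fin n)) ⊆ e4 →
        ({u, v} : Finset (Fin n)) ⊆ e3 → ({u, v} : Finset (Fin n)) ∈ Q {x, y} := by
      intro u v huv hnep e3 e4 he3 he4 hne34 hp3 hp4 hq3
      have hqc : ({u, v} : Finset (Fin n)).card = 2 := by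
        rw [Finset.card_insert_of_notMem (by simp [huv]), Finset.card_singleton]
      have hd1 := deg_eq_one hn hfree h3 hpc hqc he3 he4 hne34 hp3 hp4 hq3 hnep
      rw [hQ]
      refine Finset.mem_filter.2 ⟨Finset.mem_filter.2 ⟨(hmemA _).2 hqc, hd1⟩,
        e3, he3, hp3, hq3⟩
    have hsub1 : ({x, a} : Finset (Fin n)) ⊆ e1 := by
      intro t ht; simp only [Finset.mem_insert, Finset.mem_singleton] at ht
      rcases ht with rfl | rfl; exacts [hxe1, hamem.1]
    have hsub2 : ({x, b} : Finset (Fin n)) ⊆ e2 := by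
      intro t ht; simp only [Finset.mem_insert, Finset.mem_singleton] at ht
      rcases ht with rfl | rfl; exacts [hxe2, hbmem.1]
    have hsub3 : ({y, a} : Finset (Fin n)) ⊆ e1 := by
      intro t ht; simp only [Finset.mem_insert, Finset.mem_singleton] at ht
      rcases ht with rfl | rfl; exacts [hye1, hamem.1]
    have hsub4 : ({y, b} : Finset (Fin n)) ⊆ e2 := by
      intro t ht; simp only [Finset.mem_insert, Finset.mem_singleton] at ht
      rcases ht with rfl | rfl; exacts [hye2, hbmem.1]
    have hne1 : ({x, a} : Finset (Fin n)) ≠ {x, y} := fun h => hamem.2 (h ▸ (by simp))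
    have hne2 : ({x, b} : Finset (Fin n)) ≠ {x, y} := fun h => hbmem.2 (h ▸ (by simp))
    have hne3 : ({y, a} : Finset (Fin n)) ≠ {x, y} := fun h => hamem.2 (h ▸ (by simp))
    have hne4 : ({y, b} : Finset (Fin n)) ≠ {x, y} := fun h => hbmem.2 (h ▸ (by simp))
    have hm1 := hmemQ x a (Ne.symm hax) hne1 e1 e2 he1 he2 hne hpe1 hpe2 hsub1
    have hm2 := hmemQ x b (Ne.symm hbx) hne2 e2 e1 he2 he1 (Ne.symm hne) hpe2 hpe1 hsub2
    have hm3 := hmemQ y a (Ne.symm hay) hne3 e1 e2 he1 he2 hne hpe1 hpe2 hsub3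
    have hm4 := hmemQ y b (Ne.symm hby) hne4 e2 e1 he2 he1 (Ne.symm hne) hpe2 hpe1 hsub4
    have hss : ({({x,a} : Finset (Fin n)), {x,b}, {y,a}, {y,b}} :
        Finset (Finset (Fin n))) ⊆ Q {x, y} := by
      intro t ht
      simp only [Finset.mem_insert, Finset.mem_singleton] at ht
      rcases ht with rfl | rfl | rfl | rfl <;> assumption
    have hd12 : ({x, a} : Finset (Fin n)) ≠ {x, b} := by
      intro h
      have : a ∈ ({x, b} : Finset (Fin n)) := h ▸ (by simp)
      simp only [Finset.mem_insert, Finset.mem_singleton] at this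
      tauto
    have hd13 : ({x, a} : Finset (Fin n)) ≠ {y, a} := by
      intro h
      have : x ∈ ({y, a} : Finset (Fin n)) := h ▸ (by simp)
      simp only [Finset.mem_insert, Finset.mem_singleton] at this
      rcases this with h' | h' <;> [exact hxy h'; exact hax h'.symm]
    have hd14 : ({x, a} : Finset (Fin n)) ≠ {y, b} := by
      intro h
      have : x ∈ ({y, b} : Finset (Fin n)) := h ▸ (by simp)
      simp only [Finset.mem_insert, Finset.mem_singleton] at this
      rcases this with h' | h' <;> [exact hxy h'; exact hbx h'.symm]
    have hd23 : ({x, b} : Finset (Fin n)) ≠ {y, a} := by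
      intro h
      have : x ∈ ({y, a} : Finset (Fin n)) := h ▸ (by simp)
      simp only [Finset.mem_insert, Finset.mem_singleton] at this
      rcases this with h' | h' <;> [exact hxy h'; exact hax h'.symm]
    have hd24 : ({x, b} : Finset (Fin n)) ≠ {y, b} := by
      intro h
      have : x ∈ ({y, b} : Finset (Fin n)) := h ▸ (by simp)
      simp only [Finset.mem_insert, Finset.mem_singleton] at this
      rcases this with h' | h' <;> [exact hxy h'; exact hbx h'.symm]
    have hd34 : ({y, a} : Finset (Fin n)) ≠ {y, b} := by
      intro h
      have : a ∈ ({y, b} : Finset (Fin n)) := h ▸ (by simp)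
      simp only [Finset.mem_insert, Finset.mem_singleton] at this
      tauto
    have hcard4 : ({({x,a} : Finset (Fin n)), {x,b}, {y,a}, {y,b}} :
        Finset (Finset (Fin n))).card = 4 := by
      rw [Finset.card_insert_of_notMem (by simp [hd12, hd13, hd14]),
        Finset.card_insert_of_notMem (by simp [hd23, hd24]),
        Finset.card_insert_of_notMem (by simp [hd34]), Finset.card_singleton]
    calc 4 = ({({x,a} : Finset (Fin n)), {x,b}, {y,a}, {y,b}} :
          Finset (Finset (Fin n))).card := hcard4.symm
      _ ≤ (Q {x, y}).card := Finset.card_le_card hss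
  -- 4 m2 ≤ m1
  have h4m : 4 * P2.card ≤ P1.card := by
    calc 4 * P2.card = ∑ _p ∈ P2, 4 := by rw [Finset.sum_const, smul_eq_mul, mul_comm]
      _ ≤ ∑ p ∈ P2, (Q p).card := Finset.sum_le_sum hQ4
      _ = (P2.biUnion Q).card := (Finset.card_biUnion hQdisj).symm
      _ ≤ P1.card := Finset.card_le_card hQsub
  -- conclude
  have hnat : 15 * H.card ≤ 6 * n.choose 2 := by
    clear * - hsum hbound hPle h4m; omega
  have hreal : (H.card : ℝ) ≤ 2 / 5 * (n.choose 2 : ℝ) := by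
    have : (15 : ℝ) * H.card ≤ 6 * (n.choose 2 : ℝ) := by exact_mod_cast hnat
    linarith
  refine ⟨hreal, ?_⟩
  have hch : ((n.choose 2 : ℕ) : ℝ) = (n : ℝ) * ((n : ℝ) - 1) / 2 := Nat.cast_choose_two ℝ n
  have hn1 : (1 : ℕ) ≤ n := by omega
  have hn' : (1 : ℝ) ≤ (n : ℝ) := by exact_mod_cast hn1
  nlinarith [hreal, hch]
end

section
/- Let n ≥ 5 and let H be a 3-uniform hypergraph on n vertices that is (5,3)-free, i.e., every set of 5 vertices contains at most 2 edges of H. Let x₁ denote the number of edges of H that share at most one vertex with every other edge, and let x₂ denote the number of unordered pairs of edges of H sharing exactly two vertices. Then 3·x₁ + 5·x₂ ≤ binom(n,2). -/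
open Finset

/-- Three distinct edges spanning at most 5 vertices contradict (5,3)-freeness. -/
lemma three_edges_false {n : ℕ} (hn : 5 ≤ n) {H : Finset (Finset (Fin n))}
    (h3 : ∀ e ∈ H, e.card = 3) (hfree : IsFiveThreeFree H)
    {a b c : Finset (Fin n)} (ha : a ∈ H) (hb : b ∈ H) (hc : c ∈ H)
    (hab : a ≠ b) (hac : a ≠ c) (hbc : b ≠ c)
    (h1 : 2 ≤ (a ∩ b).card) (h2 : 2 ≤ (a ∩ c).card) : False := by
  classical
  have hca := h3 a ha
  have hcb := h3 b hb
  have hcc := h3 c hc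
  have hub : (a ∪ b).card + (a ∩ b).card = a.card + b.card := card_union_add_card_inter a b
  have h2' : 2 ≤ ((a ∪ b) ∩ c).card :=
    le_trans h2 (card_le_card (inter_subset_inter subset_union_left le_rfl))
  have huc : (a ∪ b ∪ c).card + ((a ∪ b) ∩ c).card = (a ∪ b).card + c.card :=
    card_union_add_card_inter _ _
  have hcard : (a ∪ b ∪ c).card ≤ 5 := by omega
  obtain ⟨S, hsub, -, hS⟩ :=
    exists_subsuperset_card_eq (subset_univ (a ∪ b ∪ c)) hcard
      (by simpa using hn)
  have hle := hfree S hS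
  have hsa : a ⊆ S := (subset_union_left.trans subset_union_left).trans hsub
  have hsb : b ⊆ S := (subset_union_right.trans subset_union_left).trans hsub
  have hsc : c ⊆ S := subset_union_right.trans hsub
  have h3sub : ({a, b, c} : Finset (Finset (Fin n))) ⊆ H.filter (fun e => e ⊆ S) := by
    intro x hx
    simp only [mem_insert, mem_singleton] at hx
    rcases hx with rfl | rfl | rfl <;> simp [mem_filter, ha, hb, hc, hsa, hsb, hsc]
  have hcard3 : ({a, b, c} : Finset (Finset (Fin n))).card = 3 := by
    rw [card_insert_of_notMem (by simp [hab, hac]),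
      card_insert_of_notMem (by simp [hbc]), card_singleton]
  have := card_le_card h3sub
  omega

lemma main_aux {n : ℕ} (hn : 5 ≤ n) {H : Finset (Finset (Fin n))}
    (h3 : ∀ e ∈ H, e.card = 3) (hfree : IsFiveThreeFree H)
    (A : Finset (Finset (Fin n))) (B : Finset (Finset (Finset (Fin n))))
    (hA : ∀ e ∈ A, e ∈ H ∧ ∀ f ∈ H, f ≠ e → (e ∩ f).card ≤ 1)
    (hB : ∀ S ∈ B, ∃ u v, u ∈ H ∧ v ∈ H ∧ u ≠ v ∧ (u ∩ v).card = 2 ∧ S = {u, v}) :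
    3 * A.card + 5 * B.card ≤ n.choose 2 := by
  classical
  set g : Finset (Finset (Fin n)) → Finset (Finset (Fin n)) :=
    fun S => S.biUnion (fun e => e.powersetCard 2) with hg
  set Ai : Finset (Finset (Finset (Fin n))) := A.image (fun e => {e}) with hAi
  -- every element of a pair in B has a "partner"
  have hother : ∀ S ∈ B, ∀ a ∈ S,
      a ∈ H ∧ ∃ a', a' ∈ H ∧ a ≠ a' ∧ (a ∩ a').card = 2 ∧ S = {a, a'} := by
    intro S hS a haS
    obtain ⟨u, v, huH, hvH, huv, hc2, rfl⟩ := hB _ hS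
    rcases mem_insert.mp haS with rfl | hav
    · exact ⟨huH, v, hvH, huv, hc2, rfl⟩
    · rw [mem_singleton] at hav; subst hav
      exact ⟨hvH, u, huH, Ne.symm huv, by rwa [inter_comm], pair_comm u a⟩
  -- an x₁-edge cannot overlap ≥2 with an edge belonging to an intersecting pair
  have hkey : ∀ b c : Finset (Fin n), b ∈ H → c ∈ H → b ≠ c → (b ∩ c).card = 2 →
      ∀ e ∈ A, 2 ≤ (e ∩ b).card → False := by
    intro b c hbH hcH hbc hc2 e heA hcap
    obtain ⟨heH, hx1⟩ := hA e heA
    by_cases hbe : b = e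
    · subst hbe
      have := hx1 c hcH (Ne.symm hbc)
      omega
    · have := hx1 b hbH hbe
      omega
  -- core pair-vs-pair contradiction
  have hpcore : ∀ a a' b b' : Finset (Fin n), a ∈ H → a' ∈ H → b ∈ H → b' ∈ H →
      a ≠ a' → b ≠ b' → (a ∩ a').card = 2 → (b ∩ b').card = 2 →
      ¬(a = b ∧ a' = b') → ¬(a = b' ∧ a' = b) → 2 ≤ (a ∩ b).card → False := by
    intro a a' b b' haH ha'H hbH hb'H haa' hbb' hc1 hc2 hne1 hne2 hcap
    by_cases hab : a = b
    · subst hab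
      have ha'b' : a' ≠ b' := fun h => hne1 ⟨rfl, h⟩
      exact three_edges_false hn h3 hfree haH ha'H hb'H haa' hbb' ha'b'
        (le_of_eq hc1.symm) (le_of_eq hc2.symm)
    · by_cases ha'b : a' = b
      · subst ha'b
        have hab' : a ≠ b' := fun h => hne2 ⟨h, rfl⟩
        exact three_edges_false hn h3 hfree hbH haH hb'H (Ne.symm hab) hbb' hab'
          (by rwa [inter_comm]) (le_of_eq hc2.symm)
      · exact three_edges_false hn h3 hfree haH ha'H hbH haa' hab ha'b
          (le_of_eq hc1.symm) hcap
  -- pairwise disjointness of the assigned pair-sets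
  have hdisj : ∀ S ∈ Ai ∪ B, ∀ S' ∈ Ai ∪ B, S ≠ S' → Disjoint (g S) (g S') := by
    intro S hS S' hS' hne
    rw [disjoint_left]
    intro p hpS hpS'
    obtain ⟨a, haS, hpa⟩ := mem_biUnion.mp hpS
    obtain ⟨b, hbS, hpb⟩ := mem_biUnion.mp hpS'
    rw [mem_powersetCard] at hpa hpb
    have hcap : 2 ≤ (a ∩ b).card := by
      have hsi : p ⊆ a ∩ b := subset_inter hpa.1 hpb.1
      calc 2 = p.card := hpa.2.symm
        _ ≤ _ := card_le_card hsi
    rcases mem_union.mp hS with h1 | h1 <;> rcases mem_union.mp hS' with h2 | h2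
    · obtain ⟨e, heA, rfl⟩ := mem_image.mp h1
      obtain ⟨e', he'A, rfl⟩ := mem_image.mp h2
      rw [mem_singleton] at haS hbS; subst haS; subst hbS
      have hee' : a ≠ b := fun h => hne (by rw [h])
      have := (hA a heA).2 b (hA b he'A).1 (Ne.symm hee')
      omega
    · obtain ⟨e, heA, rfl⟩ := mem_image.mp h1
      rw [mem_singleton] at haS; subst haS
      obtain ⟨hbH, b', hb'H, hbb', hcb, rfl⟩ := hother _ h2 b hbS
      exact hkey b b' hbH hb'H hbb' hcb a heA hcap
    · obtain ⟨e, heA, rfl⟩ := mem_image.mp h2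
      rw [mem_singleton] at hbS; subst hbS
      obtain ⟨haH, a', ha'H, haa', hca, rfl⟩ := hother _ h1 a haS
      exact hkey a a' haH ha'H haa' hca b heA (by rwa [inter_comm])
    · obtain ⟨haH, a', ha'H, haa', hca, rfl⟩ := hother _ h1 a haS
      obtain ⟨hbH, b', hb'H, hbb', hcb, rfl⟩ := hother _ h2 b hbS
      refine hpcore a a' b b' haH ha'H hbH hb'H haa' hbb' hca hcb ?_ ?_ hcap
      · rintro ⟨rfl, rfl⟩; exact hne rfl
      · rintro ⟨rfl, rfl⟩; exact hne (pair_comm _ _)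
  -- cardinalities of assigned sets
  have hgsing : ∀ e ∈ A, (g {e}).card = 3 := by
    intro e heA
    have heH := (hA e heA).1
    simp only [hg, singleton_biUnion]
    rw [card_powersetCard, h3 e heH]
    decide
  have hinter : ∀ u v : Finset (Fin n),
      u.powersetCard 2 ∩ v.powersetCard 2 = (u ∩ v).powersetCard 2 := by
    intro u v; ext p
    simp only [mem_inter, mem_powersetCard, subset_inter_iff]
    tauto
  have hgpair : ∀ S ∈ B, (g S).card = 5 := by
    intro S hS
    obtain ⟨u, v, huH, hvH, huv, hc2, rfl⟩ := hB _ hS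
    have hgu : g {u, v} = u.powersetCard 2 ∪ v.powersetCard 2 := by
      simp [hg, biUnion_insert, singleton_biUnion]
    rw [hgu]
    have h1 := card_union_add_card_inter (u.powersetCard 2) (v.powersetCard 2)
    rw [hinter, card_powersetCard, card_powersetCard, card_powersetCard,
      h3 u huH, h3 v hvH, hc2] at h1
    have c1 : Nat.choose 2 2 = 1 := by decide
    have c2 : Nat.choose 3 2 = 3 := by decide
    rw [c1, c2] at h1
    omega
  -- Ai and B are disjoint (cardinality 1 vs 2 sets)
  have hABdisj : Disjoint Ai B := by
    rw [disjoint_left]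
    intro S hSA hSB
    obtain ⟨e, -, rfl⟩ := mem_image.mp hSA
    obtain ⟨u, v, -, -, huv, -, hSuv⟩ := hB _ hSB
    have hc2 : ({e} : Finset (Finset (Fin n))).card = 2 := by rw [hSuv]; exact card_pair huv
    rw [card_singleton] at hc2
    omega
  have hsum : ∑ S ∈ Ai ∪ B, (g S).card = 3 * A.card + 5 * B.card := by
    rw [sum_union hABdisj]
    have e1 : ∑ S ∈ Ai, (g S).card = 3 * A.card := by
      rw [hAi, sum_image (by intro x _ y _ h; exact singleton_inj.mp h)]
      rw [Finset.sum_congr rfl hgsing, sum_const, smul_eq_mul, mul_comm]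
    have e2 : ∑ S ∈ B, (g S).card = 5 * B.card := by
      rw [Finset.sum_congr rfl hgpair, sum_const, smul_eq_mul, mul_comm]
    rw [e1, e2]
  have hbig : ((Ai ∪ B).biUnion g).card = ∑ S ∈ Ai ∪ B, (g S).card := card_biUnion hdisj
  have hsub : (Ai ∪ B).biUnion g ⊆ (univ : Finset (Fin n)).powersetCard 2 := by
    intro p hp
    obtain ⟨S, hS, hpS⟩ := mem_biUnion.mp hp
    obtain ⟨a, haS, hpa⟩ := mem_biUnion.mp hpS
    rw [mem_powersetCard] at hpa ⊢
    exact ⟨subset_univ _, hpa.2⟩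
  have hle := card_le_card hsub
  rw [hbig, hsum, card_powersetCard, card_univ, Fintype.card_fin] at hle
  exact hle

/-- If `H` is a `(5,3)`-free `3`-uniform hypergraph on `n ≥ 5` vertices, and `x₁`
is the number of edges sharing at most one vertex with every other edge while `x₂`
is the number of unordered pairs of edges sharing exactly two vertices, then
`3·x₁ + 5·x₂ ≤ C(n,2)`. -/
theorem five_three_free_pair_count_bound (n : ℕ) (hn : 5 ≤ n)
    (H : Finset (Finset (Fin n))) (h3 : ∀ e ∈ H, e.card = 3)
    (hfree : IsFiveThreeFree H) :
    3 * (H.filter (fun e => ∀ f ∈ H, f ≠ e → (e ∩ f).card ≤ 1)).card +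
    5 * ((H.powersetCard 2).filter
          (fun P => ∀ e ∈ P, ∀ f ∈ P, e ≠ f → (e ∩ f).card = 2)).card ≤
    n.choose 2 := by
  classical
  apply main_aux hn h3 hfree
  · intro e he
    rw [mem_filter] at he
    exact he
  · intro S hS
    rw [mem_filter] at hS
    obtain ⟨hS1, hprop⟩ := hS
    rw [mem_powersetCard] at hS1
    obtain ⟨hsub, hcard⟩ := hS1
    obtain ⟨u, v, huv, rfl⟩ := card_eq_two.mp hcard
    exact ⟨u, v, hsub (by simp), hsub (by simp), huv,
      hprop u (by simp) v (by simp) huv, rfl⟩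
end
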